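/- arXiv:1908.07068 — 4 statements merged into one kernel-verified Lean document; each statement's English description precedes it below -/
import Mathlib

section
/- Ville's theorem, easy direction: if d : List Bool → ℝ≥0 is a martingale (d(σ ++ [false]) + d(σ ++ [true]) = 2·d(σ) for all σ) with d([]) > 0, then the set of infinite binary sequences x on which d succeeds, i.e. limsup_N d(x|_N) = ∞, has fair-coin product measure zero. -/
open MeasureTheory Filter

/-- The fair-coin product measure `μ^∞` on infinite binary sequences (pushforward of
Lebesgue measure on `[0,1)` under binary digit extraction). -/
noncomputable def muInf : Measure (ℕ → Bool) :=
  Measure.map (fun (t : ℝ) (n : ℕ) => decide (⌊t * 2 ^ (n + 1)⌋ % 2 = 1))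
    (volume.restrict (Set.Ico (0 : ℝ) 1))

/-- The initial segment `x|_N` (first `N` bits) of an infinite binary sequence. -/
def initSeg (x : ℕ → Bool) (N : ℕ) : List Bool := (List.range N).map x

/-!
Stopping `d` the first time it reaches a level `c` yields again a martingale, so its values on the
`2 ^ M` words of length `M` sum to `2 ^ M * d []`; hence at most `2 ^ M * d [] / c` of these words
carry a stopped value `≥ c`. The cylinder of a word of length `M` has measure at most `2⁻ᴹ`, since
the first `M` binary digits of `t ∈ [0, 1)` pin `t` to a dyadic interval of that length. So
`c * μ {x | ∃ n ≤ M, c ≤ d (x|_n)} ≤ d []`, and letting `M → ∞` the same bound holds for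
`{x | ∃ n, c ≤ d (x|_n)}`, which contains the success set for every `c`.
-/

def IsFairMartingale (d : List Bool → NNReal) : Prop :=
  ∀ σ : List Bool, d (σ ++ [false]) + d (σ ++ [true]) = 2 * d σ

/-- `d` stopped at the first prefix on which it reaches `c`; the recursion on the first letter
passes to the subtree martingale `d (b :: ·)`. -/
noncomputable def stopAtLevel (d : List Bool → NNReal) (c : NNReal) : List Bool → NNReal
  | [] => d []
  | b :: σ => if c ≤ d [] then d [] else stopAtLevel (fun τ => d (b :: τ)) c σ

namespace IsFairMartingale

variable {d : List Bool → NNReal}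

theorem comp_cons (hd : IsFairMartingale d) (b : Bool) :
    IsFairMartingale fun σ => d (b :: σ) :=
  fun σ => hd (b :: σ)

theorem sum_ofFn (hd : IsFairMartingale d) (M : ℕ) :
    ∑ v : Fin M → Bool, d (List.ofFn v) = 2 ^ M * d [] := by
  induction M generalizing d with
  | zero => simp
  | succ M ih =>
    rw [← (Fin.consEquiv fun _ => Bool).sum_comp, Fintype.sum_prod_type]
    simp only [Fin.consEquiv_apply, List.ofFn_succ, Fin.cons_zero, Fin.cons_succ,
      ih (hd.comp_cons _), Fintype.sum_bool]
    rw [← mul_add, add_comm, ← List.nil_append [true], ← List.nil_append [false], hd [],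
      pow_succ, mul_assoc]

end IsFairMartingale

theorem isFairMartingale_stopAtLevel {d : List Bool → NNReal} (hd : IsFairMartingale d)
    (c : NNReal) : IsFairMartingale (stopAtLevel d c) := by
  intro σ
  induction σ generalizing d with
  | nil =>
    simp only [List.nil_append, stopAtLevel]
    split_ifs
    · exact (two_mul _).symm
    · exact hd []
  | cons b σ ih =>
    simp only [List.cons_append, stopAtLevel]
    split_ifs
    · exact (two_mul _).symm
    · exact ih (hd.comp_cons b)

theorem le_stopAtLevel {d : List Bool → NNReal} {c : NNReal} {σ : List Bool} {n : ℕ}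
    (h : c ≤ d (σ.take n)) : c ≤ stopAtLevel d c σ := by
  induction σ generalizing d n with
  | nil => simpa [stopAtLevel] using h
  | cons b σ ih =>
    rw [stopAtLevel]
    split_ifs with hc
    · exact hc
    · cases n with
      | zero => exact absurd h hc
      | succ n => exact ih h

noncomputable def binaryDigits (t : ℝ) (n : ℕ) : Bool := decide (⌊t * 2 ^ (n + 1)⌋ % 2 = 1)

theorem muInf_eq_map : muInf = (volume.restrict (Set.Ico (0 : ℝ) 1)).map binaryDigits := rfl

theorem measurable_binaryDigits : Measurable binaryDigits :=
  measurable_pi_lambda _ fun _ =>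
    (measurable_of_countable fun z : ℤ => decide (z % 2 = 1)).comp
      (Int.measurable_floor.comp (measurable_id.mul_const _))

theorem floor_mul_two_pow_eq_of_binaryDigits_eq {t t' : ℝ} (ht : t ∈ Set.Ico (0 : ℝ) 1)
    (ht' : t' ∈ Set.Ico (0 : ℝ) 1) {M : ℕ} (h : ∀ i < M, binaryDigits t i = binaryDigits t' i) :
    ⌊t * 2 ^ M⌋ = ⌊t' * 2 ^ M⌋ := by
  induction M with
  | zero => simp [Int.floor_eq_zero_iff.2 ht, Int.floor_eq_zero_iff.2 ht']
  | succ M ih =>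
    have half (s : ℝ) : ⌊s * 2 ^ (M + 1)⌋ / 2 = ⌊s * 2 ^ M⌋ := by
      have := Int.floor_div_natCast (s * 2 ^ (M + 1)) 2
      push_cast at this
      rw [← this, pow_succ, ← mul_assoc, mul_div_cancel_right₀ _ two_ne_zero]
    have hM := ih fun i hi => h i (hi.trans M.lt_succ_self)
    have hpar := h M M.lt_succ_self
    simp only [binaryDigits, decide_eq_decide] at hpar
    rw [← half t, ← half t'] at hM
    omega

theorem measurableSet_cylinder {M : ℕ} (v : Fin M → Bool) :
    MeasurableSet {x : ℕ → Bool | ∀ i : Fin M, x i = v i} := by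
  measurability

theorem muInf_cylinder_le {M : ℕ} (v : Fin M → Bool) :
    muInf {x | ∀ i : Fin M, x i = v i} ≤ (2 ^ M)⁻¹ := by
  rw [muInf_eq_map, Measure.map_apply measurable_binaryDigits (measurableSet_cylinder v),
    Measure.restrict_apply (measurable_binaryDigits (measurableSet_cylinder v))]
  set T := binaryDigits ⁻¹' {x | ∀ i : Fin M, x i = v i} ∩ Set.Ico 0 1
  obtain hT | ⟨t₀, ht₀⟩ := T.eq_empty_or_nonempty
  · simp [hT]
  have hsub : T ⊆ (fun t => t * 2 ^ M) ⁻¹' (Int.floor ⁻¹' {⌊t₀ * 2 ^ M⌋}) :=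
    fun t ht => floor_mul_two_pow_eq_of_binaryDigits_eq ht.2 ht₀.2 fun i hi =>
      (ht.1 ⟨i, hi⟩).trans (ht₀.1 ⟨i, hi⟩).symm
  calc volume T ≤ _ := measure_mono hsub
    _ = (2 ^ M)⁻¹ := by
      rw [Real.volume_preimage_mul_right (by positivity), Int.preimage_floor_singleton,
        Real.volume_Ico]
      simp [ENNReal.ofReal_inv_of_pos, ENNReal.ofReal_pow]

theorem muInf_restrict_mem_le_card {M : ℕ} (A : Finset (Fin M → Bool)) :
    muInf {x | (fun i : Fin M => x i) ∈ A} ≤ A.card / 2 ^ M :=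
  calc muInf {x | (fun i : Fin M => x i) ∈ A}
      ≤ muInf (⋃ v ∈ A, {x | ∀ i : Fin M, x i = v i}) :=
        measure_mono fun x hx => Set.mem_biUnion hx fun _ => rfl
    _ ≤ ∑ v ∈ A, muInf {x | ∀ i : Fin M, x i = v i} := measure_biUnion_finset_le _ _
    _ ≤ ∑ _v ∈ A, (2 ^ M : ENNReal)⁻¹ := Finset.sum_le_sum fun v _ => muInf_cylinder_le v
    _ = A.card / 2 ^ M := by rw [Finset.sum_const, nsmul_eq_mul, div_eq_mul_inv]

theorem mul_muInf_le_le_sum_div {M : ℕ} (f : (Fin M → Bool) → NNReal) (c : NNReal) :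
    c * muInf {x | c ≤ f fun i => x i} ≤ (∑ v, f v : NNReal) / 2 ^ M := by
  set A := Finset.univ.filter fun v => c ≤ f v
  have hcount : A.card * c ≤ ∑ v, f v :=
    calc A.card * c = A.card • c := (nsmul_eq_mul _ _).symm
      _ ≤ ∑ v ∈ A, f v := A.card_nsmul_le_sum _ _ fun v hv => (Finset.mem_filter.1 hv).2
      _ ≤ ∑ v, f v := Finset.sum_le_sum_of_subset (Finset.filter_subset _ _)
  calc (c : ENNReal) * muInf {x | c ≤ f fun i => x i}
      ≤ c * (A.card / 2 ^ M) := by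
        gcongr
        refine (measure_mono fun x hx => ?_).trans (muInf_restrict_mem_le_card A)
        exact Finset.mem_filter.2 ⟨Finset.mem_univ _, hx⟩
    _ = ((A.card * c : NNReal) : ENNReal) / 2 ^ M := by
        push_cast
        rw [mul_div_assoc', mul_comm]
    _ ≤ (∑ v, f v : NNReal) / 2 ^ M := by gcongr

theorem initSeg_eq_ofFn (x : ℕ → Bool) (M : ℕ) :
    initSeg x M = List.ofFn fun i : Fin M => x i :=
  List.ext_getElem (by simp [initSeg]) fun n _ _ => by simp [initSeg]

theorem initSeg_take (x : ℕ → Bool) {n M : ℕ} (h : n ≤ M) :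
    (initSeg x M).take n = initSeg x n := by
  rw [initSeg, ← List.map_take, List.take_range, min_eq_left h, initSeg]

theorem IsFairMartingale.mul_muInf_exists_le_le {d : List Bool → NNReal}
    (hd : IsFairMartingale d) (c : NNReal) :
    c * muInf {x | ∃ n, c ≤ d (initSeg x n)} ≤ d [] := by
  set B : ℕ → Set (ℕ → Bool) := fun M => {x | ∃ n ≤ M, c ≤ d (initSeg x n)}
  have hunion : {x | ∃ n, c ≤ d (initSeg x n)} = ⋃ M, B M := by
    ext x
    simp only [Set.mem_ofPred_eq, Set.mem_iUnion, B]
    exact ⟨fun ⟨n, hn⟩ => ⟨n, n, le_rfl, hn⟩, fun ⟨_, n, _, hn⟩ => ⟨n, hn⟩⟩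
  have hmono : Monotone B := fun M N hMN x ⟨n, hn, hx⟩ => ⟨n, hn.trans hMN, hx⟩
  rw [hunion, hmono.measure_iUnion, ENNReal.mul_iSup]
  refine iSup_le fun M => ?_
  calc (c : ENNReal) * muInf (B M)
      ≤ c * muInf {x | c ≤ stopAtLevel d c (List.ofFn fun i : Fin M => x i)} := by
        gcongr
        rintro x ⟨n, hn, hx⟩
        rw [← initSeg_take x hn, initSeg_eq_ofFn] at hx
        exact le_stopAtLevel hx
    _ ≤ (∑ v, stopAtLevel d c (List.ofFn v) : NNReal) / 2 ^ M :=
        mul_muInf_le_le_sum_div (fun v => stopAtLevel d c (List.ofFn v)) c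
    _ = d [] := by
        rw [(isFairMartingale_stopAtLevel hd c).sum_ofFn, stopAtLevel, ENNReal.coe_mul,
          ENNReal.coe_pow, ENNReal.coe_ofNat, mul_comm,
          ENNReal.mul_div_cancel_right (by positivity) (by simp)]

theorem martingale_success_measure_zero_general (d : List Bool → NNReal)
    (hmart : ∀ σ : List Bool, d (σ ++ [false]) + d (σ ++ [true]) = 2 * d σ) :
    muInf {x : ℕ → Bool |
      limsup (fun N : ℕ => (d (initSeg x N) : ENNReal)) atTop = ⊤} = 0 := by
  by_contra hne
  obtain ⟨n, hn⟩ := ENNReal.exists_nat_mul_gt hne (ENNReal.coe_ne_top (r := d []))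
  have hsucc : {x : ℕ → Bool | limsup (fun N : ℕ => (d (initSeg x N) : ENNReal)) atTop = ⊤} ⊆
      {x | ∃ N, (n : NNReal) ≤ d (initSeg x N)} := fun x hx =>
    have hlt : ((n : NNReal) : ENNReal) < limsup (fun N => (d (initSeg x N) : ENNReal)) atTop :=
      hx ▸ ENNReal.coe_lt_top
    (frequently_lt_of_lt_limsup (by isBoundedDefault) hlt).exists.imp fun _ h =>
      (ENNReal.coe_lt_coe.1 h).le
  have hmax := IsFairMartingale.mul_muInf_exists_le_le hmart n
  rw [ENNReal.coe_natCast] at hmax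
  refine hn.not_ge (le_trans ?_ hmax)
  gcongr

/-- Ville's theorem, easy direction: if `d : List Bool → ℝ≥0` is a
martingale (`d(σ0) + d(σ1) = 2·d(σ)`) with `d([]) > 0`, then the set of sequences on
which `d` succeeds, i.e. `limsup_N d(x|_N) = ∞`, has `μ^∞`-measure zero. -/
theorem martingale_success_measure_zero (d : List Bool → NNReal)
    (hmart : ∀ σ : List Bool, d (σ ++ [false]) + d (σ ++ [true]) = 2 * d σ)
    (hpos : 0 < d []) :
    muInf {x : ℕ → Bool |
      limsup (fun N : ℕ => (d (initSeg x N) : ENNReal)) atTop = ⊤} = 0 :=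
  martingale_success_measure_zero_general d hmart
end

section
/- Deterministic factorizable correlations satisfy the CHSH inequality: suppose there is a probability space (Λ, μ) and functions A : S × Λ → {-1,1}, B : S × Λ → {-1,1}, with correlations E(a,b) = ∫_Λ A(a,λ)·B(b,λ) dμ(λ). Then for any settings a, a', b, b': |E(a,b) + E(a,b') + E(a',b) - E(a',b')| ≤ 2. -/
open MeasureTheory

/-! For each hidden variable `l` the CHSH combination
`A a (B b + B b') + A a' (B b - B b')` has absolute value at most `|B b + B b'| + |B b - B b'|`,
which is `2 max(|B b|, |B b'|) ≤ 2`. The correlations are integrals of bounded functions against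
a probability measure, so the same bound survives integration. -/

lemma abs_add_add_abs_sub_le_two {u v : ℝ} (hu : |u| ≤ 1) (hv : |v| ≤ 1) :
    |u + v| + |u - v| ≤ 2 := by
  rw [abs_le] at hu hv
  rcases abs_cases (u + v) with ⟨h₁, -⟩ | ⟨h₁, -⟩ <;>
    rcases abs_cases (u - v) with ⟨h₂, -⟩ | ⟨h₂, -⟩ <;> linarith

lemma abs_chsh_le_two {x y u v : ℝ} (hx : |x| ≤ 1) (hy : |y| ≤ 1) (hu : |u| ≤ 1)
    (hv : |v| ≤ 1) : |x * u + x * v + y * u - y * v| ≤ 2 :=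
  calc |x * u + x * v + y * u - y * v| = |x * (u + v) + y * (u - v)| := by ring_nf
    _ ≤ |x| * |u + v| + |y| * |u - v| := by
      rw [← abs_mul, ← abs_mul]
      exact abs_add_le _ _
    _ ≤ 1 * |u + v| + 1 * |u - v| := by gcongr
    _ ≤ 2 := by simpa using abs_add_add_abs_sub_le_two hu hv

section Integral

variable {Λ : Type*} [MeasurableSpace Λ] {μ : Measure Λ}

lemma integrable_mul_of_abs_le_one [IsFiniteMeasure μ] {f g : Λ → ℝ} (hf : Measurable f)
    (hg : Measurable g) (hf₁ : ∀ l, |f l| ≤ 1) (hg₁ : ∀ l, |g l| ≤ 1) :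
    Integrable (fun l => f l * g l) μ :=
  Integrable.of_bound (hf.mul hg).aestronglyMeasurable 1 <| ae_of_all _ fun l => by
    simpa [abs_mul] using mul_le_one₀ (hf₁ l) (abs_nonneg _) (hg₁ l)

theorem abs_chsh_integral_le_two [IsProbabilityMeasure μ] {S : Type*} (A B : S → Λ → ℝ)
    (hAm : ∀ s, Measurable (A s)) (hBm : ∀ s, Measurable (B s))
    (hA₁ : ∀ s l, |A s l| ≤ 1) (hB₁ : ∀ s l, |B s l| ≤ 1) (a a' b b' : S) :
    |(∫ l, A a l * B b l ∂μ) + (∫ l, A a l * B b' l ∂μ) +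
        (∫ l, A a' l * B b l ∂μ) - (∫ l, A a' l * B b' l ∂μ)| ≤ 2 := by
  have hE : ∀ s t, Integrable (fun l => A s l * B t l) μ := fun s t =>
    integrable_mul_of_abs_le_one (hAm s) (hBm t) (hA₁ s) (hB₁ t)
  have hsum : (∫ l, A a l * B b l ∂μ) + (∫ l, A a l * B b' l ∂μ) +
      (∫ l, A a' l * B b l ∂μ) - (∫ l, A a' l * B b' l ∂μ) =
      ∫ l, A a l * B b l + A a l * B b' l + A a' l * B b l - A a' l * B b' l ∂μ := by
    rw [integral_sub, integral_add, integral_add] <;> fun_prop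
  rw [hsum]
  simpa using norm_integral_le_of_norm_le_const (μ := μ) <| ae_of_all _ fun l =>
    (Real.norm_eq_abs _).trans_le <| abs_chsh_le_two (hA₁ a l) (hA₁ a' l) (hB₁ b l) (hB₁ b' l)

end Integral

lemma abs_le_one_of_eq_one_or_eq_neg_one {x : ℝ} (h : x = 1 ∨ x = -1) : |x| ≤ 1 := by
  rcases h with rfl | rfl <;> norm_num

/-- deterministic factorizable correlations satisfy the CHSH inequality.
`(Λ, μ)` is a probability space, `A, B : S × Λ → {-1,1}` are measurable response
functions, and `E(a,b) = ∫ A(a,λ)·B(b,λ) dμ(λ)`.  Then for all settings `a, a', b, b'`: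
`|E(a,b) + E(a,b') + E(a',b) - E(a',b')| ≤ 2`. -/
theorem chsh_inequality {Λ S : Type*} [MeasurableSpace Λ]
    (μ : Measure Λ) [IsProbabilityMeasure μ]
    (A B : S → Λ → ℝ)
    (hAm : ∀ s, Measurable (A s)) (hBm : ∀ s, Measurable (B s))
    (hA1 : ∀ s l, A s l = 1 ∨ A s l = -1) (hB1 : ∀ s l, B s l = 1 ∨ B s l = -1)
    (a a' b b' : S) :
    |(∫ l, A a l * B b l ∂μ) + (∫ l, A a l * B b' l ∂μ) +
        (∫ l, A a' l * B b l ∂μ) - (∫ l, A a' l * B b' l ∂μ)| ≤ 2 :=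
  abs_chsh_integral_le_two A B hAm hBm
    (fun s l => abs_le_one_of_eq_one_or_eq_neg_one (hA1 s l))
    (fun s l => abs_le_one_of_eq_one_or_eq_neg_one (hB1 s l)) a a' b b'
end

section
/- Quantum violation of CHSH: for the singlet-type state and spin measurements at angles, with P(L≠R|a,b) = sin²(a-b), the quantum correlations E(a,b) = 1 - 2·sin²(a-b) = cos(2(a-b)) violate the CHSH bound: there exist angles a, a', b, b' such that |E(a,b) + E(a,b') + E(a',b) - E(a',b')| = 2√2 > 2. -/
/-- quantum violation of CHSH.  With the quantum correlations
`E(a,b) = cos(2(a-b))` (equivalently `E = 1 - 2 sin²(a-b)`, coming from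
`P(L≠R|a,b) = sin²(a-b)`), there exist angles `a, a', b, b'` such that the CHSH
combination equals `2√2`, which exceeds the classical bound `2`. -/
theorem chsh_quantum_violation :
    ∃ a a' b b' : ℝ,
      |Real.cos (2 * (a - b)) + Real.cos (2 * (a - b')) +
          Real.cos (2 * (a' - b)) - Real.cos (2 * (a' - b'))|
        = 2 * Real.sqrt 2 ∧ (2 : ℝ) < 2 * Real.sqrt 2 := by
  refine ⟨0, Real.pi / 4, Real.pi / 8, -(Real.pi / 8), ?_, ?_⟩
  · have h1 : (2 : ℝ) * (0 - Real.pi / 8) = -(Real.pi / 4) := by ring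
    have h2 : (2 : ℝ) * (0 - -(Real.pi / 8)) = Real.pi / 4 := by ring
    have h3 : (2 : ℝ) * (Real.pi / 4 - Real.pi / 8) = Real.pi / 4 := by ring
    have h4 : (2 : ℝ) * (Real.pi / 4 - -(Real.pi / 8)) = Real.pi - Real.pi / 4 := by ring
    rw [h1, h2, h3, h4, Real.cos_neg, Real.cos_pi_sub, Real.cos_pi_div_four]
    have : Real.sqrt 2 / 2 + Real.sqrt 2 / 2 + Real.sqrt 2 / 2 - -(Real.sqrt 2 / 2)
        = 2 * Real.sqrt 2 := by ring
    rw [this, abs_of_nonneg (by positivity)]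
  · nlinarith [Real.sq_sqrt (by norm_num : (2:ℝ) ≥ 0), Real.sqrt_nonneg 2]
end

section
/- Bell's theorem in functional form: there is no probability space (Λ, μ) with measurable functions A, B : S × Λ → {0,1} on the set S = {angles} such that μ( { λ | A(a,λ) ≠ B(b,λ) } ) = sin²(a - b) for all a, b ∈ S, provided S contains three angles a, b, c with pairwise differences violating the triangle-type inequality sin²(a-c) ≤ sin²(a-b) + sin²(b-c) (for example a = 0, b = π/6, c = π/3, where sin²(π/3) = 3/4 > 1/4 + 1/4). -/
open MeasureTheory

/-! A mismatch between `A a` and `B c` forces a mismatch between `A a` and `B b`, between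
`A b` and `B c`, or between `A b` and `B b`, so the mismatch probabilities satisfy a triangle
inequality. With `μ{A a ≠ B b} = sin²(a - b)` the angles `0, π/6, π/3` violate it:
`3/4 > 1/4 + 1/4 + 0`. -/

theorem mismatch_subset {Λ ι β : Type*} (A B : ι → Λ → β) (a b c : ι) :
    {l | A a l ≠ B c l} ⊆ {l | A a l ≠ B b l} ∪ {l | A b l ≠ B c l} ∪ {l | A b l ≠ B b l} := by
  intro l hac
  by_contra hnot
  simp only [Set.mem_union, Set.mem_ofPred_eq, not_or, not_not] at hnot
  obtain ⟨⟨hab, hbc⟩, hbb⟩ := hnot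
  exact hac (hab.trans (hbb.symm.trans hbc))

section Mismatch

variable {Λ ι β : Type*} [MeasurableSpace Λ] (μ : Measure Λ) (A B : ι → Λ → β)

theorem measure_mismatch_le (a b c : ι) :
    μ {l | A a l ≠ B c l} ≤
      μ {l | A a l ≠ B b l} + μ {l | A b l ≠ B c l} + μ {l | A b l ≠ B b l} :=
  (measure_mono (mismatch_subset A B a b c)).trans <|
    (measure_union_le _ _).trans (add_le_add_left (measure_union_le _ _) _)

theorem mismatch_prob_triangle {p : ι → ι → ℝ} (hp : ∀ a b, 0 ≤ p a b)
    (h : ∀ a b, μ {l | A a l ≠ B b l} = ENNReal.ofReal (p a b)) (a b c : ι) :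
    p a c ≤ p a b + p b c + p b b := by
  have key := measure_mismatch_le μ A B a b c
  rw [h, h, h, h, ← ENNReal.ofReal_add (hp a b) (hp b c),
    ← ENNReal.ofReal_add (add_nonneg (hp a b) (hp b c)) (hp b b)] at key
  exact (ENNReal.ofReal_le_ofReal_iff (by linarith [hp a b, hp b c, hp b b])).mp key

end Mismatch

theorem sin_sq_triangle_violation :
    ¬ Real.sin (0 - Real.pi / 3) ^ 2 ≤ Real.sin (0 - Real.pi / 6) ^ 2
        + Real.sin (Real.pi / 6 - Real.pi / 3) ^ 2 + Real.sin (Real.pi / 6 - Real.pi / 6) ^ 2 := by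
  have hbc : Real.pi / 6 - Real.pi / 3 = -(Real.pi / 6) := by ring
  rw [hbc, zero_sub, zero_sub, sub_self, Real.sin_neg, Real.sin_neg, neg_sq, neg_sq,
    Real.sq_sin_pi_div_three, Real.sin_pi_div_six, Real.sin_zero]
  norm_num

theorem bell_theorem_functional_general {Λ : Type*} [MeasurableSpace Λ]
    (μ : Measure Λ) (A B : ℝ → Λ → Bool) :
    ¬ ∀ a b : ℝ,
        μ {l : Λ | A a l ≠ B b l} = ENNReal.ofReal (Real.sin (a - b) ^ 2) := fun h =>
  sin_sq_triangle_violation <|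
    mismatch_prob_triangle μ A B (fun a b => sq_nonneg (Real.sin (a - b))) h 0
      (Real.pi / 6) (Real.pi / 3)

/-- Bell's theorem in functional form.  There is no probability space
`(Λ, μ)` with response functions `A, B : S × Λ → {0,1}` (settings `S = ℝ`, the angles)
reproducing the quantum-mechanical mismatch probabilities
`μ{λ | A(a,λ) ≠ B(b,λ)} = sin²(a-b)` for all angles `a, b`; e.g. the angles
`0, π/6, π/3` violate the triangle-type inequality
`sin²(a-c) ≤ sin²(a-b) + sin²(b-c)` since `3/4 > 1/4 + 1/4`. -/
theorem bell_theorem_functional {Λ : Type*} [MeasurableSpace Λ]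
    (μ : Measure Λ) [IsProbabilityMeasure μ] (A B : ℝ → Λ → Bool) :
    ¬ ∀ a b : ℝ,
        μ {l : Λ | A a l ≠ B b l} = ENNReal.ofReal (Real.sin (a - b) ^ 2) :=
  bell_theorem_functional_general μ A B
end
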